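/- arXiv:1206.2173 — 3 statements merged into one kernel-verified Lean document; each statement's English description precedes it below -/
import Mathlib

section
/- Suppose M contains at least one pair of distinct members m_i, m_j with m_i ∩ m_j ≠ ∅. Choose such a pair m̄_0, m̄_1 with |m̄_0 ∪ m̄_1| minimal among all intersecting pairs, and set I = m̄_0 ∪ m̄_1. Then every two distinct members of M_I = {m ∈ M : m ⊆ I} intersect nontrivially. -/
/-- Suppose `M` contains an intersecting pair.  Choose an intersecting pair
`m̄₀, m̄₁` with `|m̄₀ ∪ m̄₁|` minimal and set `I = m̄₀ ∪ m̄₁`.  Then every two distinct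
members of `M_I = {m ∈ M : m ⊆ I}` intersect nontrivially. -/
theorem stmt10 (n : ℕ) (M : Finset (Finset (Fin n)))
    (hcard : ∀ m ∈ M, 1 < m.card)
    (hincomp : ∀ m ∈ M, ∀ m' ∈ M, m ≠ m' → ¬ m ⊆ m')
    (m₀ m₁ : Finset (Fin n)) (hm₀ : m₀ ∈ M) (hm₁ : m₁ ∈ M) (hne : m₀ ≠ m₁)
    (hint : (m₀ ∩ m₁).Nonempty)
    (hmin : ∀ m ∈ M, ∀ m' ∈ M, m ≠ m' → (m ∩ m').Nonempty →
      (m₀ ∪ m₁).card ≤ (m ∪ m').card) :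
    ∀ m ∈ M, ∀ m' ∈ M, m ⊆ m₀ ∪ m₁ → m' ⊆ m₀ ∪ m₁ → m ≠ m' →
      (m ∩ m').Nonempty := by
  have h01 : (m₀ \ m₁).Nonempty :=
    Finset.sdiff_nonempty.mpr (hincomp m₀ hm₀ m₁ hm₁ hne)
  have h10 : (m₁ \ m₀).Nonempty :=
    Finset.sdiff_nonempty.mpr (hincomp m₁ hm₁ m₀ hm₀ (Ne.symm hne))
  -- key: if m ⊆ I, m ≠ m', m ∩ m' nonempty, then m ∪ m' = m₀ ∪ m₁ provided m' ∈ {m₀,m₁}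
  have key : ∀ m ∈ M, ∀ m' ∈ M, m ⊆ m₀ ∪ m₁ → m' ⊆ m₀ ∪ m₁ → m ≠ m' →
      (m ∩ m').Nonempty → m ∪ m' = m₀ ∪ m₁ := by
    intro m hm m' hm' hsub hsub' hnem hnonem
    exact Finset.eq_of_subset_of_card_le (Finset.union_subset hsub hsub')
      (hmin m hm m' hm' hnem hnonem)
  -- every m ∈ M with m ⊆ I intersects m₀
  have hits0 : ∀ m ∈ M, m ⊆ m₀ ∪ m₁ → (m ∩ m₀).Nonempty := by
    intro m hm hsub
    by_contra hdis
    rw [Finset.not_nonempty_iff_eq_empty] at hdis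
    -- m nonempty, so m intersects m₁
    have hmne : m.Nonempty := Finset.card_pos.mp (lt_trans one_pos (hcard m hm))
    have h1 : (m ∩ m₁).Nonempty := by
      obtain ⟨x, hx⟩ := hmne
      rcases Finset.mem_union.mp (hsub hx) with h | h
      · exact absurd (Finset.mem_inter.mpr ⟨hx, h⟩) (by simp [hdis])
      · exact ⟨x, Finset.mem_inter.mpr ⟨hx, h⟩⟩
    have hne1 : m ≠ m₁ := by
      rintro rfl
      obtain ⟨y, hy⟩ := hint
      simp only [Finset.mem_inter] at hy
      exact absurd (Finset.mem_inter.mpr ⟨hy.2, hy.1⟩) (by simp [hdis])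
    have heq : m ∪ m₁ = m₀ ∪ m₁ :=
      key m hm m₁ hm₁ hsub Finset.subset_union_right hne1 h1
    obtain ⟨z, hz⟩ := h01
    simp only [Finset.mem_sdiff] at hz
    have : z ∈ m ∪ m₁ := heq ▸ Finset.mem_union_left _ hz.1
    rcases Finset.mem_union.mp this with h | h
    · exact absurd (Finset.mem_inter.mpr ⟨h, hz.1⟩) (by simp [hdis])
    · exact hz.2 h
  intro m hm m' hm' hsub hsub' hnem
  have hmi0 := hits0 m hm hsub
  have hmi0' := hits0 m' hm' hsub'
  by_cases h0 : m = m₀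
  · subst h0
    obtain ⟨x, hx⟩ := hmi0'
    simp only [Finset.mem_inter] at hx
    exact ⟨x, Finset.mem_inter.mpr ⟨hx.2, hx.1⟩⟩
  by_cases h0' : m' = m₀
  · subst h0'
    exact hmi0
  -- both differ from m₀, so both contain m₁ \ m₀
  have hcont : ∀ a ∈ M, a ⊆ m₀ ∪ m₁ → a ≠ m₀ → (a ∩ m₀).Nonempty → m₁ \ m₀ ⊆ a := by
    intro a ha hsuba hnea hinta
    have heq : a ∪ m₀ = m₀ ∪ m₁ :=
      key a ha m₀ hm₀ hsuba Finset.subset_union_left hnea hinta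
    intro z hz
    simp only [Finset.mem_sdiff] at hz
    have : z ∈ a ∪ m₀ := heq ▸ Finset.mem_union_right _ hz.1
    rcases Finset.mem_union.mp this with h | h
    · exact h
    · exact absurd h hz.2
  obtain ⟨z, hz⟩ := h10
  exact ⟨z, Finset.mem_inter.mpr ⟨hcont m hm hsub h0 hmi0 hz, hcont m' hm' hsub' h0' hmi0' hz⟩⟩
end

section
/- With I = m̄_0 ∪ m̄_1 chosen as a minimizer of |m ∪ m'| over intersecting pairs in M, every member m ∈ M with m ⊆ I and m ≠ m̄_0 satisfies m ∪ m̄_0 = I. -/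
/-- With `I = m̄₀ ∪ m̄₁` a minimizer of `|m ∪ m'|` over intersecting pairs
in `M`, every member `m ∈ M` with `m ⊆ I` and `m ≠ m̄₀` satisfies `m ∪ m̄₀ = I`. -/
theorem stmt11 (n : ℕ) (M : Finset (Finset (Fin n)))
    (hcard : ∀ m ∈ M, 1 < m.card)
    (hincomp : ∀ m ∈ M, ∀ m' ∈ M, m ≠ m' → ¬ m ⊆ m')
    (m₀ m₁ : Finset (Fin n)) (hm₀ : m₀ ∈ M) (hm₁ : m₁ ∈ M) (hne : m₀ ≠ m₁)
    (hint : (m₀ ∩ m₁).Nonempty)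
    (hmin : ∀ m ∈ M, ∀ m' ∈ M, m ≠ m' → (m ∩ m').Nonempty →
      (m₀ ∪ m₁).card ≤ (m ∪ m').card) :
    ∀ m ∈ M, m ⊆ m₀ ∪ m₁ → m ≠ m₀ → m ∪ m₀ = m₀ ∪ m₁ := by
  intro m hm hsub hne0
  have hint' : (m ∩ m₀).Nonempty := by
    by_contra h
    rw [Finset.not_nonempty_iff_eq_empty] at h
    have hdisj : Disjoint m m₀ := Finset.disjoint_iff_inter_eq_empty.mpr h
    have hne1 : m ≠ m₁ := by
      rintro rfl
      exact hint.ne_empty (by rw [Finset.inter_comm] at h; exact h)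
    have : m ⊆ m₁ := by
      intro x hx
      rcases Finset.mem_union.mp (hsub hx) with h0 | h1
      · exact absurd h0 (Finset.disjoint_left.mp hdisj hx)
      · exact h1
    exact hincomp m hm m₁ hm₁ hne1 this
  have hle := hmin m hm m₀ hm₀ hne0 hint'
  have hsub' : m ∪ m₀ ⊆ m₀ ∪ m₁ :=
    Finset.union_subset hsub Finset.subset_union_left
  exact (Finset.eq_of_subset_of_card_le hsub' hle)
end

section
/- If the minimal non-faces of a simplicial complex K on [n] are NOT pairwise disjoint, then there exists I ⊆ [n] such that the full subcomplex K_I has at least two minimal non-faces and all minimal non-faces of K_I pairwise intersect. -/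
/-- If the minimal non-faces of a simplicial complex `K` on `[n]` are not
pairwise disjoint, then there is an `I ⊆ [n]` such that the full subcomplex
`K_I = {σ ∈ K : σ ⊆ I}` has at least two minimal non-faces and all of its minimal
non-faces pairwise intersect.  (A minimal non-face of `K_I`, as a complex on the vertex
set `I`, is a subset of `I` not in `K_I` all of whose proper subsets are in `K_I`.) -/
theorem stmt17 (n : ℕ) (K : Set (Finset (Fin n)))
    (hdown : ∀ σ ∈ K, ∀ τ ⊆ σ, τ ∈ K)
    (hvert : ∀ v : Fin n, {v} ∈ K)
    -- two distinct minimal non-faces of `K` intersect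
    (hhyp : ∃ Q Q' : Finset (Fin n),
      (Q ∉ K ∧ ∀ τ ⊂ Q, τ ∈ K) ∧ (Q' ∉ K ∧ ∀ τ ⊂ Q', τ ∈ K) ∧ Q ≠ Q' ∧
      (Q ∩ Q').Nonempty) :
    ∃ I : Finset (Fin n),
      -- minimal non-faces of the full subcomplex `K_I`
      (∃ Q Q' : Finset (Fin n),
        (Q ⊆ I ∧ Q ∉ K ∧ ∀ τ ⊂ Q, τ ∈ K) ∧ (Q' ⊆ I ∧ Q' ∉ K ∧ ∀ τ ⊂ Q', τ ∈ K) ∧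
        Q ≠ Q') ∧
      (∀ Q Q' : Finset (Fin n),
        (Q ⊆ I ∧ Q ∉ K ∧ ∀ τ ⊂ Q, τ ∈ K) → (Q' ⊆ I ∧ Q' ∉ K ∧ ∀ τ ⊂ Q', τ ∈ K) →
        Q ≠ Q' → (Q ∩ Q').Nonempty) := by
  classical
  -- a non-face contained in a minimal non-face equals it
  have sub_eq : ∀ A B : Finset (Fin n), A ⊆ B → A ∉ K → (∀ τ ⊂ B, τ ∈ K) → A = B := by
    intro A B hAB hAK hBmin
    by_contra hne
    exact hAK (hBmin A (hAB.ssubset_of_ne hne))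
  obtain ⟨Q0, Q0', h0, h0', hne0, hint0⟩ := hhyp
  have hex : ∃ k, ∃ Q Q' : Finset (Fin n),
      ((Q ∉ K ∧ ∀ τ ⊂ Q, τ ∈ K) ∧ (Q' ∉ K ∧ ∀ τ ⊂ Q', τ ∈ K) ∧ Q ≠ Q' ∧
      (Q ∩ Q').Nonempty) ∧ (Q ∪ Q').card = k :=
    ⟨_, Q0, Q0', ⟨h0, h0', hne0, hint0⟩, rfl⟩
  obtain ⟨Q, Q', ⟨hQ, hQ', hne, hint⟩, hcard⟩ := Nat.find_spec hex
  have hmin : ∀ A B : Finset (Fin n),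
      (A ∉ K ∧ ∀ τ ⊂ A, τ ∈ K) → (B ∉ K ∧ ∀ τ ⊂ B, τ ∈ K) → A ≠ B →
      (A ∩ B).Nonempty → Nat.find hex ≤ (A ∪ B).card := by
    intro A B hA hB hAB hABint
    by_contra h
    push_neg at h
    exact Nat.find_min hex h ⟨A, B, ⟨hA, hB, hAB, hABint⟩, rfl⟩
  refine ⟨Q ∪ Q', ⟨Q, Q', ⟨Finset.subset_union_left, hQ⟩,
    ⟨Finset.subset_union_right, hQ'⟩, hne⟩, ?_⟩
  rintro P P' ⟨hPI, hPK, hPmin⟩ ⟨hP'I, hP'K, hP'min⟩ hPP'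
  by_contra hdisj
  rw [Finset.not_nonempty_iff_eq_empty, Finset.eq_empty_iff_forall_notMem] at hdisj
  have hd : ∀ x, x ∈ P → x ∈ P' → False := by
    intro x h1 h2; exact hdisj x (Finset.mem_inter.2 ⟨h1, h2⟩)
  -- P ∩ Q is nonempty
  have hPQ : (P ∩ Q).Nonempty := by
    by_contra h
    rw [Finset.not_nonempty_iff_eq_empty, Finset.eq_empty_iff_forall_notMem] at h
    have hPsub : P ⊆ Q' := by
      intro x hx
      rcases Finset.mem_union.1 (hPI hx) with hq | hq'
      · exact absurd (Finset.mem_inter.2 ⟨hx, hq⟩) (h x)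
      · exact hq'
    have hPeq : P = Q' := sub_eq P Q' hPsub hPK hQ'.2
    have hP'sub : P' ⊆ Q := by
      intro x hx
      rcases Finset.mem_union.1 (hP'I hx) with hq | hq'
      · exact hq
      · exact (hd x (by rw [hPeq]; exact hq') hx).elim
    have hP'eq : P' = Q := sub_eq P' Q hP'sub hP'K hQ.2
    obtain ⟨x, hx⟩ := hint
    rw [Finset.mem_inter] at hx
    exact hd x (hPeq ▸ hx.2) (hP'eq ▸ hx.1)
  have hP'Q : (P' ∩ Q).Nonempty := by
    by_contra h
    rw [Finset.not_nonempty_iff_eq_empty, Finset.eq_empty_iff_forall_notMem] at h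
    have hP'sub : P' ⊆ Q' := by
      intro x hx
      rcases Finset.mem_union.1 (hP'I hx) with hq | hq'
      · exact absurd (Finset.mem_inter.2 ⟨hx, hq⟩) (h x)
      · exact hq'
    have hP'eq : P' = Q' := sub_eq P' Q' hP'sub hP'K hQ'.2
    have hPsub : P ⊆ Q := by
      intro x hx
      rcases Finset.mem_union.1 (hPI hx) with hq | hq'
      · exact hq
      · exact (hd x hx (by rw [hP'eq]; exact hq')).elim
    have hPeq : P = Q := sub_eq P Q hPsub hPK hQ.2
    obtain ⟨x, hx⟩ := hint
    rw [Finset.mem_inter] at hx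
    exact hd x (hPeq ▸ hx.1) (hP'eq ▸ hx.2)
  have hPneQ : P ≠ Q := by
    rintro rfl
    obtain ⟨x, hx⟩ := hP'Q
    rw [Finset.mem_inter] at hx
    exact hd x hx.2 hx.1
  have hP'neQ : P' ≠ Q := by
    rintro rfl
    obtain ⟨x, hx⟩ := hPQ
    rw [Finset.mem_inter] at hx
    exact hd x hx.1 hx.2
  -- minimality forces P ∪ Q = Q ∪ Q' and P' ∪ Q = Q ∪ Q'
  have hPQunion : P ∪ Q = Q ∪ Q' := by
    apply Finset.eq_of_subset_of_card_le
    · exact Finset.union_subset hPI Finset.subset_union_left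
    · rw [hcard] at *
      exact hmin P Q ⟨hPK, hPmin⟩ hQ hPneQ hPQ
  have hP'Qunion : P' ∪ Q = Q ∪ Q' := by
    apply Finset.eq_of_subset_of_card_le
    · exact Finset.union_subset hP'I Finset.subset_union_left
    · rw [hcard] at *
      exact hmin P' Q ⟨hP'K, hP'min⟩ hQ hP'neQ hP'Q
  -- hence Q' \ Q ⊆ P ∩ P' = ∅, so Q' ⊆ Q, so Q' = Q
  have hQ'subQ : Q' ⊆ Q := by
    intro x hx
    by_contra hxQ
    have hxPQ : x ∈ P ∪ Q := hPQunion ▸ Finset.mem_union_right _ hx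
    have hxP'Q : x ∈ P' ∪ Q := hP'Qunion ▸ Finset.mem_union_right _ hx
    have hxP : x ∈ P := (Finset.mem_union.1 hxPQ).resolve_right hxQ
    have hxP' : x ∈ P' := (Finset.mem_union.1 hxP'Q).resolve_right hxQ
    exact hd x hxP hxP'
  exact hne ((sub_eq Q' Q hQ'subQ hQ'.1 hQ.2).symm)
end
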